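/- Let S and Q be periodic sequences in ℝ, each with an m-point motif and a minimal period (l for S, l' for Q). Then there exist a ≠ 0 and b ∈ ℝ with Q = {a·x + b : x ∈ S} (a similarity) if and only if there exists s ∈ ZMod m such that (1/l')·D(Q) = σ_s((1/l)·D(S)) or (1/l')·D(Q) = σ_s(ρ((1/l)·D(S))). In other words, the normalized distance list considered up to cyclic permutations and reversal is a complete invariant of periodic sequences up to similarity. -/

import Mathlib

/-- A periodic sequence in `ℝ` with an `m`-point motif `p` and period `l`:
the set `{p i + l * j : i ∈ Fin m, j ∈ ℤ}` where `0 ≤ p 0 < p 1 < ⋯ < p (m-1) < l`. -/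
structure PSeq (m : ℕ) where
  m_pos : 0 < m
  l : ℝ
  l_pos : 0 < l
  p : Fin m → ℝ
  p_strict : StrictMono p
  p0_nonneg : 0 ≤ p ⟨0, m_pos⟩
  p_lt : ∀ i, p i < l

namespace PSeq

variable {m : ℕ}

/-- The set of points of the periodic sequence. -/
def pts (S : PSeq m) : Set ℝ := {x | ∃ (i : Fin m) (j : ℤ), x = S.p i + S.l * j}

/-- The period is minimal: the same set of points cannot be produced with a smaller period. -/
def IsMinimal (S : PSeq m) : Prop := ∀ (m' : ℕ) (T : PSeq m'), T.pts = S.pts → S.l ≤ T.l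

/-- The distance list `D` of the periodic sequence, indexed by `ZMod m`:
`D i = p (i+1) - p i` for `i < m - 1`, and `D (m-1) = (p 0 + l) - p (m-1)`. -/
noncomputable def D (S : PSeq m) : ZMod m → ℝ := fun i =>
  letI : NeZero m := ⟨S.m_pos.ne'⟩
  if h : i.val + 1 < m then S.p ⟨i.val + 1, h⟩ - S.p ⟨i.val, i.val_lt⟩
  else S.p ⟨0, S.m_pos⟩ + S.l - S.p ⟨i.val, i.val_lt⟩

end PSeq

/-- The cyclic shift `σ_s` acting on vectors indexed by `ZMod n`: `(σ_s v) i = v (i + s)`. -/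
def shiftVec {n : ℕ} (s : ZMod n) (v : ZMod n → ℝ) : ZMod n → ℝ := fun i => v (i + s)

/-- The reversal `ρ`: `(ρ v) i = v (m - 1 - i)` (note `m - 1 = -1` in `ZMod m`). -/
def revVec {n : ℕ} (v : ZMod n → ℝ) : ZMod n → ℝ := fun i => v (-1 - i)

/-!
Enumerate the points of a periodic sequence increasingly as `enum : ℤ → ℝ`; its consecutive
differences are the distance list read periodically. Two increasing enumerations of the same set
differ by a shift of the index, so `Q = a • S + b` with `a > 0` iff `D(Q)` is a cyclic shift of
`a • D(S)`, and comparing periods forces `a = l' / l`. For `a < 0`, `Q` is an increasing affine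
image of `-S`, whose increasing enumeration `k ↦ -enum (-k)` has the reversed distance list.
-/

open Set Function

theorem exists_eq_mul_add_iff {R : Type*} [Ring R] {f g : ℤ → R} {a : R} :
    (∃ b, ∀ k, g k = a * f k + b) ↔ ∀ k, g (k + 1) - g k = a * (f (k + 1) - f k) := by
  constructor
  · rintro ⟨b, hb⟩ k
    rw [hb, hb]
    noncomm_ring
  · intro h
    have hper : Periodic (fun k => g k - a * f k) 1 := fun k => by
      have hk := h k
      rw [mul_sub, ← sub_eq_zero] at hk
      dsimp only
      rw [← sub_eq_zero, ← hk]
      abel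
    exact ⟨g 0 - a * f 0, fun k => by
      rw [← sub_eq_iff_eq_add']; simpa using hper.int_mul_eq k⟩

theorem StrictMono.exists_add_eq_of_range_eq {α : Type*} [LinearOrder α] {f g : ℤ → α}
    (hf : StrictMono f) (hg : StrictMono g) (h : range f = range g) :
    ∃ t, ∀ k, g k = f (k + t) := by
  choose φ hφ using fun k => (h ▸ mem_range_self k : g k ∈ range f)
  have hφ_mono : StrictMono φ := fun a b hab => hf.lt_iff_lt.mp (by rw [hφ, hφ]; exact hg hab)
  have hφ_surj : Surjective φ := fun j => by
    obtain ⟨k, hk⟩ : f j ∈ range g := h ▸ mem_range_self j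
    exact ⟨k, hf.injective (by rw [hφ, hk])⟩
  have hφ_succ (k : ℤ) : φ (k + 1) = φ k + 1 := by
    simpa only [Order.succ_eq_add_one, StrictMono.coe_orderIsoOfSurjective] using
      (hφ_mono.orderIsoOfSurjective φ hφ_surj).map_succ k
  have hper : Periodic (fun k => φ k - k) 1 := fun k => by simp only [hφ_succ]; ring
  refine ⟨φ 0, fun k => ?_⟩
  rw [← hφ k]
  congr 1
  rw [← sub_eq_iff_eq_add']
  simpa using hper.int_mul_eq k

theorem Int.exists_eq_fin_add_mul {m : ℕ} (hm : 0 < m) (k : ℤ) :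
    ∃ (i : Fin m) (j : ℤ), k = i + m * j := by
  have hm : (0 : ℤ) < m := mod_cast hm
  refine ⟨⟨(k % m).toNat, by have := Int.emod_lt_of_pos k hm; omega⟩, k / m, ?_⟩
  have := Int.emod_nonneg k hm.ne'
  simp only [Int.toNat_of_nonneg this, Int.emod_add_mul_ediv]

namespace PSeq

variable {m : ℕ} (S : PSeq m)

noncomputable def enum (k : ℤ) : ℝ :=
  S.p ⟨(k % m).toNat, by
    have hm : (0 : ℤ) < m := mod_cast S.m_pos
    have := Int.emod_lt_of_pos k hm
    omega⟩ + S.l * (k / m : ℤ)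

theorem enum_natCast_add_mul (i : Fin m) (j : ℤ) : S.enum (i + m * j) = S.p i + S.l * j := by
  have hm : (m : ℤ) ≠ 0 := mod_cast S.m_pos.ne'
  have hi : ((i : ℕ) : ℤ) < m := mod_cast i.isLt
  have hmod : ((i : ℤ) + m * j) % m = i := by
    rw [Int.add_mul_emod_self_left, Int.emod_eq_of_lt (by omega) hi]
  have hdiv : ((i : ℤ) + m * j) / m = j := by
    rw [Int.add_mul_ediv_left _ _ hm, Int.ediv_eq_zero_of_lt (by omega) hi, zero_add]
  simp only [enum, hmod, hdiv, Int.toNat_natCast]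

theorem range_enum : range S.enum = S.pts := by
  ext x
  constructor
  · rintro ⟨k, rfl⟩
    obtain ⟨i, j, rfl⟩ := Int.exists_eq_fin_add_mul S.m_pos k
    exact ⟨i, j, S.enum_natCast_add_mul i j⟩
  · rintro ⟨i, j, rfl⟩
    exact ⟨_, S.enum_natCast_add_mul i j⟩

theorem enum_add_period (k : ℤ) : S.enum (k + m) = S.enum k + S.l := by
  obtain ⟨i, j, rfl⟩ := Int.exists_eq_fin_add_mul S.m_pos k
  rw [show (i : ℤ) + m * j + m = i + m * (j + 1) by ring, enum_natCast_add_mul,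
    enum_natCast_add_mul]
  push_cast
  ring

theorem D_natCast [NeZero m] (i : Fin m) : S.D (i : ℕ) =
    if h : (i : ℕ) + 1 < m then S.p ⟨i + 1, h⟩ - S.p i else S.p ⟨0, S.m_pos⟩ + S.l - S.p i := by
  simp [D, ZMod.val_natCast_of_lt i.isLt]

theorem D_pos [NeZero m] (i : ZMod m) : 0 < S.D i := by
  rw [← ZMod.natCast_zmod_val i, ← Fin.val_mk (ZMod.val_lt i), D_natCast]
  split_ifs with h
  · exact sub_pos.2 (S.p_strict (Nat.lt_succ_self _))
  · linarith [S.p_lt ⟨i.val, i.val_lt⟩, S.p0_nonneg]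

theorem enum_add_one_sub (k : ℤ) : S.enum (k + 1) - S.enum k = S.D k := by
  have : NeZero m := NeZero.of_pos S.m_pos
  obtain ⟨i, j, rfl⟩ := Int.exists_eq_fin_add_mul S.m_pos k
  have hcast : ((i + m * j : ℤ) : ZMod m) = (i : ℕ) := by simp
  rw [hcast, D_natCast, enum_natCast_add_mul]
  split_ifs with h
  · rw [show (i : ℤ) + m * j + 1 = ((⟨i + 1, h⟩ : Fin m) : ℕ) + m * j by push_cast; ring,
      enum_natCast_add_mul]
    ring
  · have hi : ((i : ℕ) : ℤ) + 1 = m := by have := i.isLt; omega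
    rw [show (i : ℤ) + m * j + 1 = ((⟨0, S.m_pos⟩ : Fin m) : ℕ) + m * (j + 1) by
        push_cast; linear_combination hi, enum_natCast_add_mul]
    push_cast
    ring

theorem strictMono_enum : StrictMono S.enum :=
  have : NeZero m := NeZero.of_pos S.m_pos
  strictMono_int_of_lt_succ fun k => sub_pos.1 (S.enum_add_one_sub k ▸ S.D_pos k)

noncomputable def revEnum (k : ℤ) : ℝ := -S.enum (-k)

theorem strictMono_revEnum : StrictMono S.revEnum :=
  fun _ _ h => neg_lt_neg (S.strictMono_enum (neg_lt_neg h))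

theorem revEnum_add_one_sub (k : ℤ) : S.revEnum (k + 1) - S.revEnum k = revVec S.D k := by
  have h := S.enum_add_one_sub (-k - 1)
  rw [sub_add_cancel] at h
  have hcast : ((-k - 1 : ℤ) : ZMod m) = -1 - (k : ZMod m) := by push_cast; ring
  rw [revEnum, revEnum, revVec, ← hcast, ← h, neg_add', neg_sub_neg]

theorem revEnum_add_period (k : ℤ) : S.revEnum (k + m) = S.revEnum k + S.l := by
  have h := S.enum_add_period (-k - m)
  rw [sub_add_cancel, sub_eq_add_neg] at h
  rw [revEnum, revEnum, neg_add, h]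
  ring

theorem exists_similar_iff (Y : Set ℝ) :
    (∃ a b, a ≠ 0 ∧ Y = (fun x => a * x + b) '' S.pts) ↔
      (∃ a b, 0 < a ∧ Y = range (fun k => a * S.enum k + b)) ∨
        ∃ a b, 0 < a ∧ Y = range (fun k => a * S.revEnum k + b) := by
  have himage (a b : ℝ) :
      (fun x => a * x + b) '' S.pts = range (fun k => a * S.enum k + b) := by
    rw [← range_enum, ← range_comp]; rfl
  have hrev (a b : ℝ) :
      range (fun k => a * S.revEnum k + b) = range (fun k => -a * S.enum k + b) := by
    rw [← neg_surjective.range_comp]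
    simp [revEnum, Function.comp_def]
  simp only [himage, hrev]
  constructor
  · rintro ⟨a, b, ha, rfl⟩
    rcases ha.lt_or_gt with ha | ha
    · exact Or.inr ⟨-a, b, neg_pos.2 ha, by rw [neg_neg]⟩
    · exact Or.inl ⟨a, b, ha, rfl⟩
  · rintro (⟨a, b, ha, rfl⟩ | ⟨a, b, ha, rfl⟩)
    · exact ⟨a, b, ha.ne', rfl⟩
    · exact ⟨-a, b, neg_ne_zero.2 ha.ne', rfl⟩

variable {Q : PSeq m}

theorem pts_eq_range_iff {g : ℤ → ℝ} (hg : StrictMono g) :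
    Q.pts = range g ↔ ∃ t, ∀ k, Q.enum (k + t) = g k := by
  rw [← Q.range_enum]
  constructor
  · intro h
    obtain ⟨t, ht⟩ := Q.strictMono_enum.exists_add_eq_of_range_eq hg h
    exact ⟨t, fun k => (ht k).symm⟩
  · rintro ⟨t, ht⟩
    rw [← funext ht]
    exact ((Equiv.addRight t).surjective.range_comp Q.enum).symm

theorem exists_enum_add_eq_iff {e : ℤ → ℝ} {w : ZMod m → ℝ} (he : ∀ k, e (k + 1) - e k = w k)
    (a : ℝ) : (∃ t b, ∀ k, Q.enum (k + t) = a * e k + b) ↔ ∃ s, Q.D = shiftVec s (a • w) := by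
  have hdiff (t : ℤ) : (∃ b, ∀ k, Q.enum (k + t) = a * e k + b) ↔
      ∀ k : ℤ, Q.D ((k + t : ℤ) : ZMod m) = a * w k := by
    simp only [exists_eq_mul_add_iff, add_right_comm _ (1 : ℤ) t, Q.enum_add_one_sub, he]
  simp only [hdiff]
  constructor
  · rintro ⟨t, ht⟩
    refine ⟨-t, funext fun i => ?_⟩
    obtain ⟨k, hk⟩ := ZMod.intCast_surjective (i - (t : ZMod m))
    have hi : i = ((k + t : ℤ) : ZMod m) := by push_cast; rw [hk, sub_add_cancel]
    rw [hi, ht k]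
    simp [shiftVec]
  · rintro ⟨s, hs⟩
    obtain ⟨t, ht⟩ := ZMod.intCast_surjective (-s)
    refine ⟨t, fun k => ?_⟩
    simp [hs, shiftVec, ht]

theorem exists_pts_eq_range_iff {e : ℤ → ℝ} {w : ZMod m → ℝ} {L : ℝ} (he_mono : StrictMono e)
    (he : ∀ k, e (k + 1) - e k = w k) (he_period : ∀ k, e (k + m) = e k + L) :
    (∃ a b, 0 < a ∧ Q.pts = range (fun k => a * e k + b)) ↔
      ∃ s, (1 / Q.l) • Q.D = shiftVec s ((1 / L) • w) := by
  have hL : 0 < L := by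
    have := he_mono (lt_add_of_pos_right 0 (Nat.cast_pos.2 Q.m_pos))
    linarith [he_period 0]
  constructor
  · rintro ⟨a, b, ha, hpts⟩
    obtain ⟨t, ht⟩ := (pts_eq_range_iff ((he_mono.const_mul ha).add_const b)).1 hpts
    have hl : Q.l = a * L := by
      have h0 : Q.enum t = a * e 0 + b := by simpa using ht 0
      have hQ_period : Q.enum (m + t) = Q.enum t + Q.l := by
        rw [add_comm]; exact Q.enum_add_period t
      have he_period0 : e m = e 0 + L := by simpa using he_period 0
      linear_combination hQ_period.symm + ht m - h0 + a * he_period0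
    obtain ⟨s, hs⟩ := (exists_enum_add_eq_iff he a).1 ⟨t, b, ht⟩
    refine ⟨s, funext fun i => ?_⟩
    simp only [hs, hl, shiftVec, Pi.smul_apply, smul_eq_mul]
    field_simp
  · rintro ⟨s, hs⟩
    have hD : Q.D = shiftVec s ((Q.l / L) • w) := funext fun i => by
      have hi := congrFun hs i
      have hQl := Q.l_pos.ne'
      simp only [shiftVec, Pi.smul_apply, smul_eq_mul] at hi ⊢
      field_simp at hi ⊢
      linarith
    obtain ⟨t, b, ht⟩ := (exists_enum_add_eq_iff he _).2 ⟨s, hD⟩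
    have ha : 0 < Q.l / L := div_pos Q.l_pos hL
    exact ⟨_, b, ha, (pts_eq_range_iff ((he_mono.const_mul ha).add_const b)).2 ⟨t, ht⟩⟩

end PSeq

theorem normalized_distance_list_complete_up_to_similarity_general {m : ℕ}
    (S Q : PSeq m) :
    (∃ (a b : ℝ), a ≠ 0 ∧ Q.pts = (fun x => a * x + b) '' S.pts) ↔
    ∃ s : ZMod m, (1 / Q.l) • Q.D = shiftVec s ((1 / S.l) • S.D) ∨
      (1 / Q.l) • Q.D = shiftVec s (revVec ((1 / S.l) • S.D)) := by
  rw [S.exists_similar_iff,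
    PSeq.exists_pts_eq_range_iff S.strictMono_enum S.enum_add_one_sub S.enum_add_period,
    PSeq.exists_pts_eq_range_iff S.strictMono_revEnum S.revEnum_add_one_sub
      S.revEnum_add_period, ← exists_or]
  -- `(1 / S.l) • revVec S.D` and `revVec ((1 / S.l) • S.D)` agree definitionally
  rfl

/-- the normalized distance list up to cyclic permutations and reversal
is a complete invariant of periodic sequences up to similarity. -/
theorem normalized_distance_list_complete_up_to_similarity {m : ℕ}
    (S Q : PSeq m) (hS : S.IsMinimal) (hQ : Q.IsMinimal) :
    (∃ (a b : ℝ), a ≠ 0 ∧ Q.pts = (fun x => a * x + b) '' S.pts) ↔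
    ∃ s : ZMod m, (1 / Q.l) • Q.D = shiftVec s ((1 / S.l) • S.D) ∨
      (1 / Q.l) • Q.D = shiftVec s (revVec ((1 / S.l) • S.D)) :=
  normalized_distance_list_complete_up_to_similarity_general S Q
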